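/- arXiv:1202.0127 — 2 statements merged into one kernel-verified Lean document; each statement's English description precedes it below -/
import Mathlib

section
/- Let f : [a,b] → ℝ be continuous with 0 ≤ a < b < ∞, let k > 1, and let p, q > 0. If |f|^(k/(k-1)) is quasi-convex on [a,b], then ∫_a^b (x-a)^p (b-x)^q f(x) dx ≤ (b-a)^(p+q+1) · [B(kp+1, kq+1)]^(1/k) · (max{|f(a)|^(k/(k-1)), |f(b)|^(k/(k-1))})^((k-1)/k). -/
noncomputable def eulerBeta (x y : ℝ) : ℝ :=
  ∫ t in (0:ℝ)..1, t ^ (x - 1) * (1 - t) ^ (y - 1)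

/-!
Quasi-convexity bounds `|f|^(k/(k-1))` on `[a, b]` by its larger endpoint value `M`, so
`f ≤ M^((k-1)/k)` pointwise. The substitution `x = a + (b - a) t` turns the integral of the
weight `(x - a)^p (b - x)^q` into `(b - a)^(p+q+1) B(p+1, q+1)`, and Hölder's inequality with
exponents `k` and `k/(k-1)` against the constant `1` on the probability space `(0, 1]` gives
`B(p+1, q+1) ≤ B(kp+1, kq+1)^(1/k)`.
-/

open MeasureTheory Set

theorem integral_le_integral_rpow_one_div {α : Type*} [MeasurableSpace α] {μ : Measure α}
    [IsProbabilityMeasure μ] {k : ℝ} (hk : 1 < k) {g : α → ℝ} (hg : 0 ≤ᵐ[μ] g)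
    (hgk : MemLp g (ENNReal.ofReal k) μ) :
    ∫ a, g a ∂μ ≤ (∫ a, g a ^ k ∂μ) ^ (1 / k) := by
  have hconj : k.HolderConjugate (k / (k - 1)) :=
    (Real.holderConjugate_iff_eq_conjExponent hk).2 rfl
  simpa using integral_mul_le_Lp_mul_Lq_of_nonneg hconj hg (ae_of_all _ fun _ ↦ zero_le_one)
    hgk (memLp_const 1)

theorem eulerBeta_add_one (p q : ℝ) :
    eulerBeta (p + 1) (q + 1) = ∫ t in Ioc (0 : ℝ) 1, t ^ p * (1 - t) ^ q := by
  simp only [eulerBeta, add_sub_cancel_right, intervalIntegral.integral_of_le zero_le_one]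

theorem eulerBeta_add_one_le_rpow {p q k : ℝ} (hp : 0 ≤ p) (hq : 0 ≤ q) (hk : 1 < k) :
    eulerBeta (p + 1) (q + 1) ≤ eulerBeta (k * p + 1) (k * q + 1) ^ (1 / k) := by
  have : IsProbabilityMeasure (volume.restrict (Ioc (0 : ℝ) 1)) := ⟨by simp⟩
  set g : ℝ → ℝ := fun t ↦ t ^ p * (1 - t) ^ q
  have hg_cont : Continuous g :=
    (Real.continuous_rpow_const hp).mul
      ((Real.continuous_rpow_const hq).comp (continuous_const.sub continuous_id))
  have hg_mem : ∀ t ∈ Ioc (0 : ℝ) 1, 0 ≤ g t ∧ g t ≤ 1 := fun t ⟨ht0, ht1⟩ ↦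
    ⟨by positivity, mul_le_one₀ (Real.rpow_le_one ht0.le ht1 hp) (by positivity)
      (Real.rpow_le_one (by linarith) (by linarith) hq)⟩
  have hg_ae : ∀ᵐ t ∂volume.restrict (Ioc (0 : ℝ) 1), 0 ≤ g t ∧ g t ≤ 1 :=
    ae_restrict_of_forall_mem measurableSet_Ioc hg_mem
  have hg_pow : ∫ t in Ioc (0 : ℝ) 1, g t ^ k = eulerBeta (k * p + 1) (k * q + 1) := by
    rw [eulerBeta_add_one]
    refine setIntegral_congr_fun measurableSet_Ioc fun t ⟨ht0, ht1⟩ ↦ ?_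
    rw [Real.mul_rpow (by positivity) (by positivity), ← Real.rpow_mul ht0.le,
      ← Real.rpow_mul (by linarith : (0 : ℝ) ≤ 1 - t), mul_comm p, mul_comm q]
  rw [eulerBeta_add_one, ← hg_pow]
  exact integral_le_integral_rpow_one_div hk (hg_ae.mono fun _ h ↦ h.1)
    (MemLp.of_bound hg_cont.aestronglyMeasurable 1
      (hg_ae.mono fun _ h ↦ by rw [Real.norm_of_nonneg h.1]; exact h.2))

theorem integral_sub_rpow_mul_sub_rpow {a b : ℝ} (hab : a < b) (p q : ℝ) :
    ∫ x in a..b, (x - a) ^ p * (b - x) ^ q =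
      (b - a) ^ (p + q + 1) * eulerBeta (p + 1) (q + 1) := by
  have hba : 0 < b - a := sub_pos.2 hab
  have h := intervalIntegral.mul_integral_comp_mul_add
    (f := fun x ↦ (x - a) ^ p * (b - x) ^ q) (a := 0) (b := 1) (c := b - a) (d := a)
  simp only [mul_zero, zero_add, mul_one, sub_add_cancel] at h
  rw [← h, eulerBeta, ← intervalIntegral.integral_const_mul,
    ← intervalIntegral.integral_const_mul]
  refine intervalIntegral.integral_congr fun t ht ↦ ?_
  rw [uIcc_of_le zero_le_one] at ht
  have ht1 : 0 ≤ 1 - t := by linarith [ht.2]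
  simp only [add_sub_cancel_right]
  rw [show b - ((b - a) * t + a) = (b - a) * (1 - t) by ring, Real.mul_rpow hba.le ht.1,
    Real.mul_rpow hba.le ht1, Real.rpow_add hba, Real.rpow_add hba, Real.rpow_one]
  ring

theorem le_max_of_mem_Icc {g : ℝ → ℝ} {a b x : ℝ}
    (hg : ∀ t ∈ Icc (0 : ℝ) 1, g (t * a + (1 - t) * b) ≤ max (g a) (g b))
    (hx : x ∈ Icc a b) :
    g x ≤ max (g a) (g b) := by
  rw [← segment_eq_Icc (hx.1.trans hx.2)] at hx
  obtain ⟨s, t, hs, ht, hst, rfl⟩ := hx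
  obtain rfl : t = 1 - s := by linarith
  exact hg s ⟨hs, by linarith⟩

theorem le_rpow_one_div_of_abs_rpow_le {y M r : ℝ} (hr : 0 < r) (h : |y| ^ r ≤ M) :
    y ≤ M ^ (1 / r) :=
  calc y ≤ |y| := le_abs_self y
    _ = (|y| ^ r) ^ (1 / r) := by rw [one_div, Real.rpow_rpow_inv (abs_nonneg y) hr.ne']
    _ ≤ M ^ (1 / r) := by gcongr

theorem stmt2_general (a b p q k : ℝ) (f : ℝ → ℝ) (hab : a < b)
    (hf : ContinuousOn f (Set.Icc a b)) (hk : 1 < k) (hp : 0 < p) (hq : 0 < q)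
    (hqc : ∀ x ∈ Set.Icc a b, ∀ y ∈ Set.Icc a b, ∀ t ∈ Set.Icc (0:ℝ) 1,
      |f (t * x + (1 - t) * y)| ^ (k / (k - 1)) ≤
        max (|f x| ^ (k / (k - 1))) (|f y| ^ (k / (k - 1)))) :
    ∫ x in a..b, (x - a) ^ p * (b - x) ^ q * f x ≤
      (b - a) ^ (p + q + 1) * (eulerBeta (k * p + 1) (k * q + 1)) ^ (1 / k) *
        (max (|f a| ^ (k / (k - 1))) (|f b| ^ (k / (k - 1)))) ^ ((k - 1) / k) := by
  have hK : 0 < k / (k - 1) := div_pos (by linarith) (by linarith)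
  set M := max (|f a| ^ (k / (k - 1))) (|f b| ^ (k / (k - 1)))
  have hf_le : ∀ x ∈ Icc a b, f x ≤ M ^ ((k - 1) / k) := fun x hx ↦ by
    rw [← one_div_div]
    exact le_rpow_one_div_of_abs_rpow_le hK <|
      le_max_of_mem_Icc (g := fun x ↦ |f x| ^ (k / (k - 1)))
        (hqc a (left_mem_Icc.2 hab.le) b (right_mem_Icc.2 hab.le)) hx
  have hw : Continuous fun x : ℝ ↦ (x - a) ^ p * (b - x) ^ q :=
    ((Real.continuous_rpow_const hp.le).comp (continuous_id.sub continuous_const)).mul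
      ((Real.continuous_rpow_const hq.le).comp (continuous_const.sub continuous_id))
  calc ∫ x in a..b, (x - a) ^ p * (b - x) ^ q * f x
      ≤ ∫ x in a..b, (x - a) ^ p * (b - x) ^ q * M ^ ((k - 1) / k) := by
        refine intervalIntegral.integral_mono_on hab.le
          ((hw.continuousOn.mul hf).intervalIntegrable_of_Icc hab.le)
          ((hw.mul continuous_const).intervalIntegrable a b) fun x hx ↦ ?_
        have : 0 ≤ x - a := by linarith [hx.1]
        have : 0 ≤ b - x := by linarith [hx.2]
        gcongr
        exact hf_le x hx
    _ = (b - a) ^ (p + q + 1) * eulerBeta (p + 1) (q + 1) * M ^ ((k - 1) / k) := by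
        rw [intervalIntegral.integral_mul_const, integral_sub_rpow_mul_sub_rpow hab]
    _ ≤ (b - a) ^ (p + q + 1) * eulerBeta (k * p + 1) (k * q + 1) ^ (1 / k) *
          M ^ ((k - 1) / k) := by
        gcongr
        exact eulerBeta_add_one_le_rpow hp.le hq.le hk

theorem stmt2 (a b p q k : ℝ) (f : ℝ → ℝ) (ha : 0 ≤ a) (hab : a < b)
    (hf : ContinuousOn f (Set.Icc a b)) (hk : 1 < k) (hp : 0 < p) (hq : 0 < q)
    (hqc : ∀ x ∈ Set.Icc a b, ∀ y ∈ Set.Icc a b, ∀ t ∈ Set.Icc (0:ℝ) 1,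
      |f (t * x + (1 - t) * y)| ^ (k / (k - 1)) ≤
        max (|f x| ^ (k / (k - 1))) (|f y| ^ (k / (k - 1)))) :
    ∫ x in a..b, (x - a) ^ p * (b - x) ^ q * f x ≤
      (b - a) ^ (p + q + 1) * (eulerBeta (k * p + 1) (k * q + 1)) ^ (1 / k) *
        (max (|f a| ^ (k / (k - 1))) (|f b| ^ (k / (k - 1)))) ^ ((k - 1) / k) :=
  stmt2_general a b p q k f hab hf hk hp hq hqc
end

section
/- Let f : [a,b] → ℝ be continuous with 0 ≤ a < b < ∞, let k > 1, and let p, q > 0. If |f|^(k/(k-1)) is P-convex on [a,b], then ∫_a^b (x-a)^p (b-x)^q f(x) dx ≤ (b-a)^(p+q+1) · [B(kp+1, kq+1)]^(1/k) · (|f(a)|^(k/(k-1)) + |f(b)|^(k/(k-1)))^((k-1)/k). -/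
open Set MeasureTheory

def PConvexOn (s : Set ℝ) (g : ℝ → ℝ) : Prop :=
  ∀ x ∈ s, ∀ y ∈ s, ∀ t ∈ Icc (0:ℝ) 1, g (t * x + (1 - t) * y) ≤ g x + g y

theorem PConvexOn.le_add_of_mem_Icc {a b x : ℝ} {g : ℝ → ℝ} (hg : PConvexOn (Icc a b) g)
    (hx : x ∈ Icc a b) : g x ≤ g a + g b := by
  have hab : a ≤ b := hx.1.trans hx.2
  rcases hab.eq_or_lt with rfl | hab
  · obtain rfl : x = a := le_antisymm hx.2 hx.1
    have := hg x hx x hx 0 (left_mem_Icc.2 zero_le_one)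
    simp only [zero_mul, sub_zero, one_mul, zero_add] at this
    linarith
  have hba : 0 < b - a := sub_pos.2 hab
  have ht : (b - x) / (b - a) ∈ Icc (0:ℝ) 1 :=
    ⟨div_nonneg (sub_nonneg.2 hx.2) hba.le, (div_le_one hba).2 (by linarith [hx.1])⟩
  have hx_eq : (b - x) / (b - a) * a + (1 - (b - x) / (b - a)) * b = x := by
    field_simp
    ring
  simpa only [hx_eq] using hg a (left_mem_Icc.2 hab.le) b (right_mem_Icc.2 hab.le) _ ht

theorem abs_le_of_pConvexOn_abs_rpow {a b r x : ℝ} {f : ℝ → ℝ} (hr : 0 < r)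
    (hf : PConvexOn (Icc a b) fun x ↦ |f x| ^ r) (hx : x ∈ Icc a b) :
    |f x| ≤ (|f a| ^ r + |f b| ^ r) ^ r⁻¹ :=
  calc |f x| = (|f x| ^ r) ^ r⁻¹ := (Real.rpow_rpow_inv (abs_nonneg _) hr.ne').symm
    _ ≤ (|f a| ^ r + |f b| ^ r) ^ r⁻¹ := by
      gcongr
      exact hf.le_add_of_mem_Icc hx

theorem integral_sub_rpow_mul_rpow_sub {a b : ℝ} (hab : a < b) (p q : ℝ) :
    ∫ x in a..b, (x - a) ^ p * (b - x) ^ q =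
      (b - a) ^ (p + q + 1) * ∫ t in (0:ℝ)..1, t ^ p * (1 - t) ^ q := by
  have hba : 0 < b - a := sub_pos.2 hab
  have hsubst := intervalIntegral.smul_integral_comp_mul_add (E := ℝ) (a := 0) (b := 1)
    (fun x ↦ (x - a) ^ p * (b - x) ^ q) (b - a) a
  simp only [mul_zero, zero_add, mul_one, sub_add_cancel, smul_eq_mul] at hsubst
  rw [← hsubst, ← intervalIntegral.integral_const_mul, ← intervalIntegral.integral_const_mul]
  refine intervalIntegral.integral_congr fun t ht ↦ ?_
  rw [uIcc_of_le zero_le_one] at ht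
  have h1 : (b - a) * t + a - a = (b - a) * t := by ring
  have h2 : b - ((b - a) * t + a) = (b - a) * (1 - t) := by ring
  simp only [h1, h2]
  rw [Real.mul_rpow hba.le ht.1, Real.mul_rpow hba.le (sub_nonneg.2 ht.2), Real.rpow_add hba,
    Real.rpow_add hba, Real.rpow_one]
  ring

theorem integral_le_rpow_integral_rpow {α : Type*} [MeasurableSpace α] {μ : Measure α}
    [IsProbabilityMeasure μ] {k : ℝ} (hk : 1 < k) {g : α → ℝ} (hg : 0 ≤ᵐ[μ] g)
    (hg_mem : MemLp g (ENNReal.ofReal k) μ) :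
    ∫ x, g x ∂μ ≤ (∫ x, g x ^ k ∂μ) ^ (1 / k) := by
  have := integral_mul_le_Lp_mul_Lq_of_nonneg (Real.HolderConjugate.conjExponent hk) hg
    (Filter.Eventually.of_forall fun _ ↦ zero_le_one) hg_mem (memLp_const 1)
  simpa using this

theorem integral_rpow_mul_one_sub_rpow_le_eulerBeta {p q k : ℝ} (hp : 0 ≤ p) (hq : 0 ≤ q)
    (hk : 1 < k) :
    ∫ t in (0:ℝ)..1, t ^ p * (1 - t) ^ q ≤ eulerBeta (k * p + 1) (k * q + 1) ^ (1 / k) := by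
  have : IsProbabilityMeasure (volume.restrict (Ioc (0:ℝ) 1)) := ⟨by simp⟩
  have hg_nonneg : ∀ t ∈ Ioc (0:ℝ) 1, 0 ≤ t ^ p * (1 - t) ^ q := fun t ht ↦
    mul_nonneg (Real.rpow_nonneg ht.1.le _) (Real.rpow_nonneg (sub_nonneg.2 ht.2) _)
  have hg_mem : MemLp (fun t : ℝ ↦ t ^ p * (1 - t) ^ q) (ENNReal.ofReal k)
      (volume.restrict (Ioc 0 1)) := by
    refine MemLp.of_bound (by fun_prop (disch := assumption)) 1 ?_
    filter_upwards [ae_restrict_mem measurableSet_Ioc] with t ht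
    rw [Real.norm_of_nonneg (hg_nonneg t ht)]
    exact mul_le_one₀ (Real.rpow_le_one ht.1.le ht.2 hp) (Real.rpow_nonneg (sub_nonneg.2 ht.2) _)
      (Real.rpow_le_one (sub_nonneg.2 ht.2) (by linarith [ht.1]) hq)
  have hHolder := integral_le_rpow_integral_rpow hk
    ((ae_restrict_iff' measurableSet_Ioc).2 (Filter.Eventually.of_forall hg_nonneg)) hg_mem
  rw [intervalIntegral.integral_of_le zero_le_one]
  refine hHolder.trans_eq ?_
  rw [eulerBeta, intervalIntegral.integral_of_le zero_le_one]
  congr 1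
  refine setIntegral_congr_fun measurableSet_Ioc fun t ht ↦ ?_
  rw [Real.mul_rpow (Real.rpow_nonneg ht.1.le _) (Real.rpow_nonneg (sub_nonneg.2 ht.2) _),
    ← Real.rpow_mul ht.1.le, ← Real.rpow_mul (sub_nonneg.2 ht.2), add_sub_cancel_right,
    add_sub_cancel_right, mul_comm p k, mul_comm q k]

theorem stmt5_general (a b p q k : ℝ) (f : ℝ → ℝ) (hab : a < b)
    (hf : ContinuousOn f (Set.Icc a b)) (hk : 1 < k) (hp : 0 < p) (hq : 0 < q)
    (hpc : ∀ x ∈ Set.Icc a b, ∀ y ∈ Set.Icc a b, ∀ t ∈ Set.Icc (0:ℝ) 1,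
      |f (t * x + (1 - t) * y)| ^ (k / (k - 1)) ≤
        |f x| ^ (k / (k - 1)) + |f y| ^ (k / (k - 1))) :
    ∫ x in a..b, (x - a) ^ p * (b - x) ^ q * f x ≤
      (b - a) ^ (p + q + 1) * (eulerBeta (k * p + 1) (k * q + 1)) ^ (1 / k) *
        (|f a| ^ (k / (k - 1)) + |f b| ^ (k / (k - 1))) ^ ((k - 1) / k) := by
  set M := (|f a| ^ (k / (k - 1)) + |f b| ^ (k / (k - 1))) ^ ((k - 1) / k)
  have hf_le : ∀ x ∈ Icc a b, f x ≤ M := fun x hx ↦ by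
    have := abs_le_of_pConvexOn_abs_rpow (div_pos (by linarith) (by linarith)) hpc hx
    rw [inv_div] at this
    exact (le_abs_self _).trans this
  have hw : Continuous fun x : ℝ ↦ (x - a) ^ p * (b - x) ^ q := by
    fun_prop (disch := positivity)
  have hw_nonneg : ∀ x ∈ Icc a b, 0 ≤ (x - a) ^ p * (b - x) ^ q := fun x hx ↦
    mul_nonneg (Real.rpow_nonneg (sub_nonneg.2 hx.1) _) (Real.rpow_nonneg (sub_nonneg.2 hx.2) _)
  calc ∫ x in a..b, (x - a) ^ p * (b - x) ^ q * f x
      ≤ ∫ x in a..b, (x - a) ^ p * (b - x) ^ q * M := by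
        refine intervalIntegral.integral_mono_on hab.le ?_ ?_ fun x hx ↦
          mul_le_mul_of_nonneg_left (hf_le x hx) (hw_nonneg x hx)
        · exact (hw.continuousOn.mul hf).intervalIntegrable_of_Icc hab.le
        · exact (hw.mul continuous_const).intervalIntegrable a b
    _ = (b - a) ^ (p + q + 1) * (∫ t in (0:ℝ)..1, t ^ p * (1 - t) ^ q) * M := by
        rw [intervalIntegral.integral_mul_const, integral_sub_rpow_mul_rpow_sub hab]
    _ ≤ (b - a) ^ (p + q + 1) * eulerBeta (k * p + 1) (k * q + 1) ^ (1 / k) * M := by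
        have hM : 0 ≤ M := by positivity
        gcongr
        exact integral_rpow_mul_one_sub_rpow_le_eulerBeta hp.le hq.le hk

theorem stmt5 (a b p q k : ℝ) (f : ℝ → ℝ) (ha : 0 ≤ a) (hab : a < b)
    (hf : ContinuousOn f (Set.Icc a b)) (hk : 1 < k) (hp : 0 < p) (hq : 0 < q)
    (hpc : ∀ x ∈ Set.Icc a b, ∀ y ∈ Set.Icc a b, ∀ t ∈ Set.Icc (0:ℝ) 1,
      |f (t * x + (1 - t) * y)| ^ (k / (k - 1)) ≤
        |f x| ^ (k / (k - 1)) + |f y| ^ (k / (k - 1))) :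
    ∫ x in a..b, (x - a) ^ p * (b - x) ^ q * f x ≤
      (b - a) ^ (p + q + 1) * (eulerBeta (k * p + 1) (k * q + 1)) ^ (1 / k) *
        (|f a| ^ (k / (k - 1)) + |f b| ^ (k / (k - 1))) ^ ((k - 1) / k) :=
  stmt5_general a b p q k f hab hf hk hp hq hpc
end
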